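/- arXiv:2311.11854 — 3 statements merged into one kernel-verified Lean document; each statement's English description precedes it below -/
import Mathlib

section
/- For every natural number n, the Neumann approximation error satisfies the convergence-rate estimate ‖u* − u^{[n]}‖_Y ≤ exp(M·t*)·((M·t*)^{n+1}/(n+1)!)·‖g‖_Y. -/
/-!
Since `K` integrates only over `[0, t]`, induction on `d` gives the pointwise bound
`‖(Kᵈ u)(t)‖ ≤ (M t)ᵈ / d! · ‖u‖`, hence `‖Kᵈ u‖ ≤ (M T)ᵈ / d! · ‖u‖`. The Neumann partial sums are
then dominated by the exponential series, so `‖u*‖ ≤ exp (M T) ‖g‖`, and by continuity of `Kⁿ⁺¹`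
the tail `u* − u⁽ⁿ⁾` equals `Kⁿ⁺¹ u*`.
-/

open scoped Nat
open Set Finset MeasureTheory Filter Topology

theorem integral_pow_div_factorial (d : ℕ) (t : ℝ) :
    ∫ τ in (0:ℝ)..t, τ ^ d / d ! = t ^ (d + 1) / (d + 1)! := by
  rw [intervalIntegral.integral_div, integral_pow, Nat.factorial_succ]
  push_cast
  field_simp
  ring

theorem nonneg_of_forall_norm_kernel_le {F : Type*} [SeminormedAddCommGroup F] {T M : ℝ}
    {A : ℝ → ℝ → F} (hT : 0 ≤ T) (hA : ∀ t τ : ℝ, 0 ≤ τ → τ ≤ t → t ≤ T → ‖A t τ‖ ≤ M) :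
    0 ≤ M :=
  (norm_nonneg _).trans (hA 0 0 le_rfl le_rfl hT)

section Volterra

variable {𝕜 E : Type*} [NontriviallyNormedField 𝕜] [NormedAddCommGroup E] [NormedSpace 𝕜 E]
  [NormedSpace ℝ E] {T M : ℝ} (hT : 0 ≤ T) {A : ℝ → ℝ → E →L[𝕜] E}
  (hA : ∀ t τ : ℝ, 0 ≤ τ → τ ≤ t → t ≤ T → ‖A t τ‖ ≤ M)
  {K : C(Icc (0:ℝ) T, E) →L[𝕜] C(Icc (0:ℝ) T, E)}
  (hK : ∀ u t, K u t = ∫ τ in (0:ℝ)..(t:ℝ), A t τ (u (projIcc 0 T hT τ)))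

include hA hK in
theorem norm_volterra_pow_apply_le (d : ℕ) (u : C(Icc (0:ℝ) T, E)) (t : Icc (0:ℝ) T) :
    ‖(K ^ d) u t‖ ≤ (M * t) ^ d / d ! * ‖u‖ := by
  have hM := nonneg_of_forall_norm_kernel_le hT hA
  induction d generalizing t with
  | zero => simpa using u.norm_coe_le_norm t
  | succ d ih =>
    obtain ⟨t, ht0, htT⟩ := t
    have hbound : ∀ τ ∈ Ioc 0 t,
        ‖A t τ ((K ^ d) u (projIcc 0 T hT τ))‖ ≤ M ^ (d + 1) * ‖u‖ * (τ ^ d / d !) := by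
      rintro τ ⟨hτ0, hτt⟩
      rw [projIcc_of_mem hT ⟨hτ0.le, hτt.trans htT⟩]
      calc ‖A t τ ((K ^ d) u ⟨τ, hτ0.le, hτt.trans htT⟩)‖
          ≤ M * ((M * τ) ^ d / d ! * ‖u‖) :=
            (A t τ).le_of_opNorm_le_of_le (hA t τ hτ0.le hτt htT) (ih _)
        _ = M ^ (d + 1) * ‖u‖ * (τ ^ d / d !) := by ring
    have hcont : Continuous fun τ : ℝ => M ^ (d + 1) * ‖u‖ * (τ ^ d / d !) := by fun_prop
    calc ‖(K ^ (d + 1)) u ⟨t, ht0, htT⟩‖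
        = ‖∫ τ in (0:ℝ)..t, A t τ ((K ^ d) u (projIcc 0 T hT τ))‖ := by
          rw [pow_succ', mul_apply_eq_comp, hK]
      _ ≤ ∫ τ in (0:ℝ)..t, M ^ (d + 1) * ‖u‖ * (τ ^ d / d !) :=
          intervalIntegral.norm_integral_le_of_norm_le ht0 (.of_forall hbound)
            (hcont.intervalIntegrable _ _)
      _ = (M * t) ^ (d + 1) / (d + 1)! * ‖u‖ := by
          rw [intervalIntegral.integral_const_mul, integral_pow_div_factorial]
          ring

include hA hK in
theorem norm_volterra_pow_le (d : ℕ) (u : C(Icc (0:ℝ) T, E)) :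
    ‖(K ^ d) u‖ ≤ (M * T) ^ d / d ! * ‖u‖ := by
  have hM := nonneg_of_forall_norm_kernel_le hT hA
  refine (ContinuousMap.norm_le _ (by positivity)).mpr fun t => ?_
  refine (norm_volterra_pow_apply_le hT hA hK d u t).trans ?_
  have ⟨ht0, htT⟩ := t.2
  gcongr

end Volterra

section Neumann

theorem sub_sum_range_pow_apply_eq_of_tendsto {R F : Type*} [Ring R] [AddCommGroup F]
    [TopologicalSpace F] [IsTopologicalAddGroup F] [T2Space F] [Module R F]
    {K : F →L[R] F} {g u : F}
    (hlim : Tendsto (fun m => ∑ d ∈ range (m + 1), (K ^ d) g) atTop (𝓝 u)) (n : ℕ) :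
    u - ∑ d ∈ range (n + 1), (K ^ d) g = (K ^ (n + 1)) u := by
  set S : ℕ → F := fun m => ∑ d ∈ range (m + 1), (K ^ d) g
  have hshift : ∀ m, (K ^ (n + 1)) (S m) = S (m + (n + 1)) - S n := fun m => by
    simp only [S]
    rw [show m + (n + 1) + 1 = (n + 1) + (m + 1) by omega, sum_range_add _ (n + 1),
      add_sub_cancel_left, map_sum]
    simp only [← mul_apply_eq_comp, ← pow_add]
  refine tendsto_nhds_unique ((hlim.comp (tendsto_add_atTop_nat (n + 1))).sub_const _) ?_
  simpa only [Function.comp_def, hshift] using ((K ^ (n + 1)).continuous.tendsto u).comp hlim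

variable {𝕜 F : Type*} [NontriviallyNormedField 𝕜] [SeminormedAddCommGroup F] [NormedSpace 𝕜 F]
  {K : F →L[𝕜] F} {c : ℝ} {g u : F}

theorem norm_le_exp_mul_of_tendsto_sum_pow_apply (hc : 0 ≤ c)
    (hK : ∀ d v, ‖(K ^ d) v‖ ≤ c ^ d / d ! * ‖v‖)
    (hlim : Tendsto (fun m => ∑ d ∈ range (m + 1), (K ^ d) g) atTop (𝓝 u)) :
    ‖u‖ ≤ Real.exp c * ‖g‖ := by
  refine le_of_tendsto hlim.norm (.of_forall fun m => ?_)
  calc ‖∑ d ∈ range (m + 1), (K ^ d) g‖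
      ≤ ∑ d ∈ range (m + 1), c ^ d / d ! * ‖g‖ :=
        (norm_sum_le _ _).trans (sum_le_sum fun d _ => hK d g)
    _ = (∑ d ∈ range (m + 1), c ^ d / d !) * ‖g‖ := (sum_mul ..).symm
    _ ≤ Real.exp c * ‖g‖ := by gcongr; exact Real.sum_le_exp_of_nonneg hc _

theorem norm_sub_sum_range_pow_apply_le [T2Space F] (hc : 0 ≤ c)
    (hK : ∀ d v, ‖(K ^ d) v‖ ≤ c ^ d / d ! * ‖v‖)
    (hlim : Tendsto (fun m => ∑ d ∈ range (m + 1), (K ^ d) g) atTop (𝓝 u)) (n : ℕ) :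
    ‖u - ∑ d ∈ range (n + 1), (K ^ d) g‖ ≤ Real.exp c * (c ^ (n + 1) / (n + 1)!) * ‖g‖ := by
  rw [sub_sum_range_pow_apply_eq_of_tendsto hlim]
  calc ‖(K ^ (n + 1)) u‖ ≤ c ^ (n + 1) / (n + 1)! * ‖u‖ := hK _ _
    _ ≤ c ^ (n + 1) / (n + 1)! * (Real.exp c * ‖g‖) := by
        gcongr; exact norm_le_exp_mul_of_tendsto_sum_pow_apply hc hK hlim
    _ = Real.exp c * (c ^ (n + 1) / (n + 1)!) * ‖g‖ := by ring

end Neumann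

theorem stmt3_general
    {E : Type*} [NormedAddCommGroup E] [NormedSpace ℂ E]
    (T : ℝ) (hT : 0 < T) (M : ℝ)
    (A : ℝ → ℝ → (E →L[ℂ] E))
    (hAbound : ∀ t τ : ℝ, 0 ≤ τ → τ ≤ t → t ≤ T → ‖A t τ‖ ≤ M)
    (K : C(Set.Icc (0:ℝ) T, E) →L[ℂ] C(Set.Icc (0:ℝ) T, E))
    (hK : ∀ (u : C(Set.Icc (0:ℝ) T, E)) (t : Set.Icc (0:ℝ) T),
      (K u) t = ∫ τ in (0:ℝ)..(t:ℝ), A t τ (u (Set.projIcc 0 T hT.le τ)))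
    (g : C(Set.Icc (0:ℝ) T, E))
    (ustar : C(Set.Icc (0:ℝ) T, E))
    (hlim : Filter.Tendsto (fun n => ∑ d ∈ Finset.range (n+1), (K ^ d) g)
      Filter.atTop (nhds ustar))
    (n : ℕ) :
    ‖ustar - ∑ d ∈ Finset.range (n+1), (K ^ d) g‖ ≤
      Real.exp (M * T) * ((M * T) ^ (n+1) / (n+1).factorial) * ‖g‖ := by
  have hM : 0 ≤ M := nonneg_of_forall_norm_kernel_le hT.le hAbound
  exact norm_sub_sum_range_pow_apply_le (by positivity)
    (norm_volterra_pow_le hT.le hAbound hK) hlim n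

/-- For every natural number `n`, the Neumann approximation error satisfies the
convergence-rate estimate `‖u* − u^{[n]}‖_Y ≤ exp(M·t*)·((M·t*)^{n+1}/(n+1)!)·‖g‖_Y`. -/
theorem stmt3
    {E : Type*} [NormedAddCommGroup E] [NormedSpace ℂ E] [CompleteSpace E]
    (T : ℝ) (hT : 0 < T) (M : ℝ)
    (A : ℝ → ℝ → (E →L[ℂ] E))
    (hAcont : ContinuousOn (fun p : ℝ × ℝ => A p.1 p.2)
      {p : ℝ × ℝ | 0 ≤ p.2 ∧ p.2 ≤ p.1 ∧ p.1 ≤ T})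
    (hAbound : ∀ t τ : ℝ, 0 ≤ τ → τ ≤ t → t ≤ T → ‖A t τ‖ ≤ M)
    (K : C(Set.Icc (0:ℝ) T, E) →L[ℂ] C(Set.Icc (0:ℝ) T, E))
    (hK : ∀ (u : C(Set.Icc (0:ℝ) T, E)) (t : Set.Icc (0:ℝ) T),
      (K u) t = ∫ τ in (0:ℝ)..(t:ℝ), A t τ (u (Set.projIcc 0 T hT.le τ)))
    (g : C(Set.Icc (0:ℝ) T, E))
    (ustar : C(Set.Icc (0:ℝ) T, E))
    (hlim : Filter.Tendsto (fun n => ∑ d ∈ Finset.range (n+1), (K ^ d) g)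
      Filter.atTop (nhds ustar))
    (n : ℕ) :
    ‖ustar - ∑ d ∈ Finset.range (n+1), (K ^ d) g‖ ≤
      Real.exp (M * T) * ((M * T) ^ (n+1) / (n+1).factorial) * ‖g‖ :=
  stmt3_general T hT M A hAbound K hK g ustar hlim n
end

section
/- If c : ℝ → ℂ is continuously differentiable on [0,t] with t > 0 and ω > 0, then |∫₀ᵗ c(s)·e^{iωs} ds| ≤ C̄·min{t, ω⁻¹}, where C̄ = 2·sup_{s∈[0,t]}|c(s)| + t·sup_{s∈[0,t]}|c'(s)|. -/
/-!
Bound the integral in two ways. Trivially, `|e^{iωs}| = 1` gives `t · sup |c|`. Alternatively,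
integrate by parts against the primitive `e^{iωs} / (iω)`, which has modulus `ω⁻¹`: the two
boundary terms contribute `2 · sup |c| / ω` and the remaining integral `t · sup |c'| / ω`.
-/

open Set Complex MeasureTheory intervalIntegral

theorem ContinuousOn.norm_le_iSup_norm {E : Type*} [NormedAddCommGroup E] {f : ℝ → E}
    {a b s : ℝ} (hf : ContinuousOn f (Icc a b)) (hs : s ∈ Icc a b) :
    ‖f s‖ ≤ ⨆ x : Icc a b, ‖f x‖ :=
  have : CompactSpace (Icc a b) := isCompact_iff_compactSpace.mp isCompact_Icc
  le_ciSup (isCompact_range (continuous_norm.comp hf.domRestrict)).bddAbove ⟨s, hs⟩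

theorem norm_exp_I_mul_mul_ofReal (ω s : ℝ) : ‖exp (I * ω * s)‖ = 1 := by
  rw [mul_assoc, ← ofReal_mul, norm_exp_I_mul_ofReal]

theorem hasDerivAt_exp_I_mul_div {ω : ℝ} (hω : ω ≠ 0) (s : ℝ) :
    HasDerivAt (fun x : ℝ => exp (I * ω * x) / (I * ω)) (exp (I * ω * s)) s := by
  have hIω : I * (ω : ℂ) ≠ 0 := mul_ne_zero I_ne_zero (ofReal_ne_zero.mpr hω)
  have := (((hasDerivAt_id (s : ℂ)).const_mul (I * ω)).cexp.div_const (I * ω)).comp_ofReal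
  simpa [hIω] using this

variable {ω a b M M' : ℝ} {c c' : ℝ → ℂ}

theorem norm_integral_mul_exp_I_mul_le (hM : ∀ s ∈ uIcc a b, ‖c s‖ ≤ M) :
    ‖∫ s in a..b, c s * exp (I * ω * s)‖ ≤ M * |b - a| :=
  norm_integral_le_of_norm_le_const fun s hs => by
    simpa [norm_exp_I_mul_mul_ofReal] using hM s (uIoc_subset_uIcc hs)

theorem norm_integral_mul_exp_I_mul_le_of_hasDerivAt (hω : ω ≠ 0)
    (hderiv : ∀ s ∈ uIcc a b, HasDerivAt c (c' s) s) (hint : IntervalIntegrable c' volume a b)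
    (hM : ∀ s ∈ uIcc a b, ‖c s‖ ≤ M) (hM' : ∀ s ∈ uIcc a b, ‖c' s‖ ≤ M') :
    ‖∫ s in a..b, c s * exp (I * ω * s)‖ ≤ (2 * M + |b - a| * M') * |ω|⁻¹ := by
  set v : ℝ → ℂ := fun x => exp (I * ω * x) / (I * ω)
  have hv : ∀ s, ‖v s‖ = |ω|⁻¹ := fun s => by simp [v, norm_exp_I_mul_mul_ofReal]
  have hexp : IntervalIntegrable (fun s : ℝ => exp (I * ω * s)) volume a b :=
    (by fun_prop : Continuous fun s : ℝ => exp (I * ω * s)).intervalIntegrable a b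
  rw [integral_mul_deriv_eq_deriv_mul hderiv (fun s _ => hasDerivAt_exp_I_mul_div hω s) hint hexp]
  have hboundary : ∀ s ∈ uIcc a b, ‖c s * v s‖ ≤ M * |ω|⁻¹ := fun s hs => by
    rw [norm_mul, hv]; gcongr; exact hM s hs
  have hrest : ‖∫ s in a..b, c' s * v s‖ ≤ M' * |ω|⁻¹ * |b - a| :=
    norm_integral_le_of_norm_le_const fun s hs => by
      rw [norm_mul, hv]; gcongr; exact hM' s (uIoc_subset_uIcc hs)
  calc ‖c b * v b - c a * v a - ∫ s in a..b, c' s * v s‖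
      ≤ ‖c b * v b‖ + ‖c a * v a‖ + ‖∫ s in a..b, c' s * v s‖ :=
        (norm_sub_le _ _).trans (by gcongr; exact norm_sub_le _ _)
    _ ≤ M * |ω|⁻¹ + M * |ω|⁻¹ + M' * |ω|⁻¹ * |b - a| := by
        gcongr
        · exact hboundary b right_mem_uIcc
        · exact hboundary a left_mem_uIcc
    _ = (2 * M + |b - a| * M') * |ω|⁻¹ := by ring

/-- If `c : ℝ → ℂ` is continuously differentiable on `[0,t]` with `t > 0` and
`ω > 0`, then `|∫₀ᵗ c(s)·e^{iωs} ds| ≤ C̄·min{t, ω⁻¹}`, where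
`C̄ = 2·sup_{s∈[0,t]}|c(s)| + t·sup_{s∈[0,t]}|c'(s)|`. -/
theorem stmt4 (t ω : ℝ) (ht : 0 < t) (hω : 0 < ω)
    (c c' : ℝ → ℂ)
    (hderiv : ∀ s ∈ Set.Icc (0:ℝ) t, HasDerivAt c (c' s) s)
    (hc' : ContinuousOn c' (Set.Icc (0:ℝ) t)) :
    ‖∫ s in (0:ℝ)..t, c s * Complex.exp (Complex.I * ω * s)‖ ≤
      (2 * (⨆ s : Set.Icc (0:ℝ) t, ‖c s‖) +
        t * (⨆ s : Set.Icc (0:ℝ) t, ‖c' s‖)) * min t ω⁻¹ := by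
  have hc : ContinuousOn c (Icc 0 t) := fun s hs => (hderiv s hs).continuousAt.continuousWithinAt
  have hIcc : uIcc 0 t = Icc 0 t := uIcc_of_le ht.le
  have hM : ∀ s ∈ uIcc 0 t, ‖c s‖ ≤ _ := fun s hs => hc.norm_le_iSup_norm (hIcc ▸ hs)
  have hM' : ∀ s ∈ uIcc 0 t, ‖c' s‖ ≤ _ := fun s hs => hc'.norm_le_iSup_norm (hIcc ▸ hs)
  have hM0 := (norm_nonneg _).trans (hM 0 left_mem_uIcc)
  have hM'0 := (norm_nonneg _).trans (hM' 0 left_mem_uIcc)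
  rw [mul_min_of_nonneg _ _ (by positivity)]
  refine le_min ?_ ?_
  · calc _ ≤ _ * |t - 0| := norm_integral_mul_exp_I_mul_le hM
      _ ≤ _ := by rw [sub_zero, abs_of_pos ht]; nlinarith [mul_nonneg (mul_nonneg ht.le ht.le) hM'0]
  · have hint : IntervalIntegrable c' volume 0 t := (hIcc ▸ hc').intervalIntegrable
    simpa [abs_of_pos ht, abs_of_pos hω] using norm_integral_mul_exp_I_mul_le_of_hasDerivAt
      hω.ne' (fun s hs => hderiv s (hIcc ▸ hs)) hint hM hM'
end

section
/- For every t ≥ 0, every natural number n ≥ 1, and every real ω > 0: ∫₀ᵗ e^{iωτ}·exp((t−τ)·L)·α·exp(τ·L)·u₀ dτ = Σ_{m=0}^{n−1} (iω)^{−(m+1)}·(e^{iωt}·ad_L^m(α)·exp(t·L) − exp(t·L)·ad_L^m(α))·u₀ + (iω)^{−n}·∫₀ᵗ e^{iωτ}·exp((t−τ)·L)·ad_L^n(α)·exp(τ·L)·u₀ dτ. -/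
/-- Iterated commutator: `adL L 0 x = x`, `adL L (k+1) x = L * adL L k x - adL L k x * L`. -/
def adL {A : Type*} [Ring A] (L : A) : ℕ → A → A
  | 0, x => x
  | k+1, x => L * adL L k x - adL L k x * L

/-!
Write `E s = exp (s • L)`. Since `E` commutes with `L`, the derivative of
`τ ↦ E (t - τ) * β * E τ * u₀` is `-E (t - τ) * ad_L β * E τ * u₀`. Integrating
`e^{cτ}` against it by parts therefore trades `β` for `ad_L β` at the cost of a factor `c⁻¹`
and an explicit boundary term; iterating `n` times gives the expansion.
-/

open NormedSpace intervalIntegral MeasureTheory Interval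

theorem adL_succ {A : Type*} [Ring A] (L x : A) (k : ℕ) :
    adL L (k + 1) x = L * adL L k x - adL L k x * L :=
  rfl

theorem integral_cexp_mul_smul_eq_of_hasDerivAt {E : Type*} [NormedAddCommGroup E]
    [NormedSpace ℂ E] [CompleteSpace E] {c : ℂ} (hc : c ≠ 0) {F F' : ℝ → E} {a b : ℝ}
    (hF : ∀ x ∈ [[a, b]], HasDerivAt F (F' x) x) (hF' : IntervalIntegrable F' volume a b) :
    ∫ x in a..b, Complex.exp (c * x) • F x
      = c⁻¹ • (Complex.exp (c * b) • F b - Complex.exp (c * a) • F a)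
        - c⁻¹ • ∫ x in a..b, Complex.exp (c * x) • F' x := by
  have hexp : ∀ x : ℝ, HasDerivAt (fun x : ℝ => Complex.exp (c * x))
      (c * Complex.exp (c * x)) x := by
    intro x
    have h := ((hasDerivAt_id' (x : ℂ)).const_mul c).cexp.comp_ofReal
    rwa [mul_one, mul_comm] at h
  have hcont : Continuous fun x : ℝ => c * Complex.exp (c * x) := by fun_prop
  have hparts := integral_smul_deriv_eq_deriv_smul (fun x _ => hexp x) hF
    (hcont.intervalIntegrable a b) hF'
  simp only [mul_smul, intervalIntegral.integral_smul] at hparts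
  rw [← smul_sub, eq_inv_smul_iff₀ hc, hparts, sub_sub_cancel]

section ExpFlow

variable {A : Type*} [NormedRing A] [NormedAlgebra ℂ A] [CompleteSpace A]

theorem hasDerivAt_exp_ofReal_smul (L : A) (s : ℝ) :
    HasDerivAt (fun s : ℝ => exp ((s : ℂ) • L)) (exp ((s : ℂ) • L) * L) s := by
  simpa only [Complex.coe_smul] using hasDerivAt_exp_smul_const (𝕂 := ℝ) L s

theorem continuous_exp_ofReal_smul (L : A) : Continuous fun s : ℝ => exp ((s : ℂ) • L) :=
  continuous_iff_continuousAt.2 fun s => (hasDerivAt_exp_ofReal_smul L s).continuousAt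

theorem hasDerivAt_exp_sub_smul_mul_mul_exp_smul_mul (L β u : A) (t τ : ℝ) :
    HasDerivAt (fun τ : ℝ => exp (((t - τ : ℝ) : ℂ) • L) * β * exp ((τ : ℂ) • L) * u)
      (-(exp (((t - τ : ℝ) : ℂ) • L) * (L * β - β * L) * exp ((τ : ℂ) • L) * u)) τ := by
  have hleft : HasDerivAt (fun τ : ℝ => exp (((t - τ : ℝ) : ℂ) • L))
      (-(exp (((t - τ : ℝ) : ℂ) • L) * L)) τ := by
    have h := (hasDerivAt_exp_ofReal_smul L (t - τ)).scomp τ ((hasDerivAt_id' τ).const_sub t)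
    rwa [neg_smul, one_smul] at h
  refine (((hleft.mul_const β).mul (hasDerivAt_exp_ofReal_smul L τ)).mul_const u).congr_deriv ?_
  rw [← ((Commute.refl L).smul_right (τ : ℂ)).exp_right.eq]
  noncomm_ring

theorem integral_cexp_smul_exp_mul_exp_mul_eq {c : ℂ} (hc : c ≠ 0) (L β u : A) (t : ℝ) :
    ∫ τ in (0 : ℝ)..t, Complex.exp (c * τ) •
        (exp (((t - τ : ℝ) : ℂ) • L) * β * exp ((τ : ℂ) • L) * u)
      = c⁻¹ • ((Complex.exp (c * t) • (β * exp ((t : ℂ) • L)) - exp ((t : ℂ) • L) * β) * u)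
        + c⁻¹ • ∫ τ in (0 : ℝ)..t, Complex.exp (c * τ) •
            (exp (((t - τ : ℝ) : ℂ) • L) * (L * β - β * L) * exp ((τ : ℂ) • L) * u) := by
  have hcont : Continuous fun τ : ℝ =>
      -(exp (((t - τ : ℝ) : ℂ) • L) * (L * β - β * L) * exp ((τ : ℂ) • L) * u) := by
    have hE := continuous_exp_ofReal_smul L
    exact ((((hE.comp (continuous_const.sub continuous_id)).mul continuous_const).mul hE).mul
      continuous_const).neg
  rw [integral_cexp_mul_smul_eq_of_hasDerivAt hc
    (fun τ _ => hasDerivAt_exp_sub_smul_mul_mul_exp_smul_mul L β u t τ)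
    (hcont.intervalIntegrable 0 t)]
  simp only [smul_neg, intervalIntegral.integral_neg, sub_neg_eq_add, sub_self, Complex.ofReal_zero,
    sub_zero, zero_smul, exp_zero, mul_zero, Complex.exp_zero, one_smul, one_mul, mul_one,
    sub_mul, smul_mul_assoc, mul_assoc]

theorem integral_cexp_smul_exp_mul_exp_mul_eq_sum {c : ℂ} (hc : c ≠ 0) (L α u : A) (t : ℝ)
    (n : ℕ) :
    ∫ τ in (0 : ℝ)..t, Complex.exp (c * τ) •
        (exp (((t - τ : ℝ) : ℂ) • L) * α * exp ((τ : ℂ) • L) * u)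
      = (∑ m ∈ Finset.range n, (c ^ (m + 1))⁻¹ •
          ((Complex.exp (c * t) • (adL L m α * exp ((t : ℂ) • L))
            - exp ((t : ℂ) • L) * adL L m α) * u))
        + (c ^ n)⁻¹ • ∫ τ in (0 : ℝ)..t, Complex.exp (c * τ) •
            (exp (((t - τ : ℝ) : ℂ) • L) * adL L n α * exp ((τ : ℂ) • L) * u) := by
  induction n with
  | zero => simp only [Finset.range_zero, Finset.sum_empty, pow_zero, inv_one, one_smul, zero_add, adL]
  | succ n ih =>
    rw [ih, integral_cexp_smul_exp_mul_exp_mul_eq hc, ← adL_succ, smul_add, smul_smul, smul_smul,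
      ← mul_inv, ← pow_succ, Finset.sum_range_succ, add_assoc]

end ExpFlow

theorem stmt6_general {A : Type*} [NormedRing A] [NormedAlgebra ℂ A] [CompleteSpace A]
    (L α u₀ : A) (t : ℝ) (n : ℕ) (ω : ℝ) (hω : 0 < ω) :
    (∫ τ in (0:ℝ)..t, Complex.exp (Complex.I * ω * τ) •
        (NormedSpace.exp (((t - τ : ℝ) : ℂ) • L) * α * NormedSpace.exp ((τ : ℂ) • L) * u₀))
    = (∑ m ∈ Finset.range n, ((Complex.I * ω) ^ (m + 1))⁻¹ •
        ((Complex.exp (Complex.I * ω * t) • (adL L m α * NormedSpace.exp ((t : ℂ) • L))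
          - NormedSpace.exp ((t : ℂ) • L) * adL L m α) * u₀))
      + ((Complex.I * ω) ^ n)⁻¹ •
        ∫ τ in (0:ℝ)..t, Complex.exp (Complex.I * ω * τ) •
          (NormedSpace.exp (((t - τ : ℝ) : ℂ) • L) * adL L n α *
            NormedSpace.exp ((τ : ℂ) • L) * u₀) :=
  integral_cexp_smul_exp_mul_exp_mul_eq_sum
    (mul_ne_zero Complex.I_ne_zero (Complex.ofReal_ne_zero.2 hω.ne')) L α u₀ t n

/-- For every `t ≥ 0`, every `n ≥ 1`, and every real `ω > 0`:
`∫₀ᵗ e^{iωτ}·exp((t−τ)L)·α·exp(τL)·u₀ dτ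
 = Σ_{m=0}^{n−1} (iω)^{−(m+1)}·(e^{iωt}·ad_L^m(α)·exp(tL) − exp(tL)·ad_L^m(α))·u₀
   + (iω)^{−n}·∫₀ᵗ e^{iωτ}·exp((t−τ)L)·ad_L^n(α)·exp(τL)·u₀ dτ`. -/
theorem stmt6 {A : Type*} [NormedRing A] [NormedAlgebra ℂ A] [CompleteSpace A]
    (L α u₀ : A) (t : ℝ) (ht : 0 ≤ t) (n : ℕ) (hn : 1 ≤ n) (ω : ℝ) (hω : 0 < ω) :
    (∫ τ in (0:ℝ)..t, Complex.exp (Complex.I * ω * τ) •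
        (NormedSpace.exp (((t - τ : ℝ) : ℂ) • L) * α * NormedSpace.exp ((τ : ℂ) • L) * u₀))
    = (∑ m ∈ Finset.range n, ((Complex.I * ω) ^ (m + 1))⁻¹ •
        ((Complex.exp (Complex.I * ω * t) • (adL L m α * NormedSpace.exp ((t : ℂ) • L))
          - NormedSpace.exp ((t : ℂ) • L) * adL L m α) * u₀))
      + ((Complex.I * ω) ^ n)⁻¹ •
        ∫ τ in (0:ℝ)..t, Complex.exp (Complex.I * ω * τ) •
          (NormedSpace.exp (((t - τ : ℝ) : ℂ) • L) * adL L n α *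
            NormedSpace.exp ((τ : ℂ) • L) * u₀) :=
  stmt6_general L α u₀ t n ω hω
end
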